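/- arXiv:1810.01932 — 2 statements merged into one kernel-verified Lean document; each statement's English description precedes it below -/
import Mathlib

section
/- Define v₁(X) := -|x'|²/(n-1) + 2(x_n + 1) r and v₂(X) := -|x'|²/(n-1) - 2(x_n + 1) r, where r = √(x_n² + z²) and X = (x', x_n, z) ∈ ℝ^{n+1}. Then Δ(U_n v₁) = 0 in B₁ \ P⁻ and Δ(Ū_n v₂) = 0 in B₁ \ P⁺, where U_n = ∂_{x_n}U(x_n,z), Ū_n = ∂_{x_n}Ū(x_n,z). Moreover lim_{r→0}((v₁)_r + (v₂)_r) = 0 on L = {x_n = 0, z = 0}. -/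
open Real Filter Topology

/-- `ℝ^{n+1}` written as `X = (x', x_n, z)` with `x' ∈ ℝ^m`, `m = n-1`. -/
abbrev V (m : ℕ) := EuclideanSpace ℝ (Fin m) × ℝ × ℝ

/-- The function `U(t,z) = r^{1/2} cos(θ/2)`. -/
noncomputable def U2 (p : ℝ × ℝ) : ℝ :=
  Real.sqrt (Real.sqrt (p.1 ^ 2 + p.2 ^ 2)) *
    Real.cos (Complex.arg (p.1 + p.2 * Complex.I) / 2)

/-- `U_n(X) = ∂_{x_n} U(x_n, z)`. -/
noncomputable def Un {m : ℕ} (X : V m) : ℝ := deriv (fun t => U2 (t, X.2.2)) X.2.1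

/-- `Ū_n(X) = ∂_{x_n} Ū(x_n, z)` where `Ū(t,z) = U(-t,z)`. -/
noncomputable def Ubarn {m : ℕ} (X : V m) : ℝ := deriv (fun t => U2 (-t, X.2.2)) X.2.1

/-- Laplacian on `ℝ^{n+1}`. -/
noncomputable def lapV {m : ℕ} (u : V m → ℝ) (X : V m) : ℝ :=
  (∑ i : Fin m,
      iteratedDeriv 2 (fun s : ℝ => u (X.1 + s • EuclideanSpace.single i (1:ℝ), X.2.1, X.2.2)) 0)
    + iteratedDeriv 2 (fun s => u (X.1, X.2.1 + s, X.2.2)) 0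
    + iteratedDeriv 2 (fun s => u (X.1, X.2.1, X.2.2 + s)) 0

/-- Partial derivative in the `x_n` direction. -/
noncomputable def pdN {m : ℕ} (u : V m → ℝ) (X : V m) : ℝ :=
  deriv (fun s => u (X.1, X.2.1 + s, X.2.2)) 0

/-- Partial derivative in the `z` direction. -/
noncomputable def pdZ {m : ℕ} (u : V m → ℝ) (X : V m) : ℝ :=
  deriv (fun s => u (X.1, X.2.1, X.2.2 + s)) 0

/-- `r = √(x_n² + z²)`. -/
noncomputable def rad {m : ℕ} (X : V m) : ℝ := Real.sqrt (X.2.1 ^ 2 + X.2.2 ^ 2)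

/-- Radial derivative `g_r(X) = (x_n/r)∂_{x_n}g + (z/r)∂_z g`. -/
noncomputable def radDeriv {m : ℕ} (g : V m → ℝ) (X : V m) : ℝ :=
  (X.2.1 / rad X) * pdN g X + (X.2.2 / rad X) * pdZ g X

/-- `v₁(X) = -|x'|²/(n-1) + 2(x_n+1) r`. -/
noncomputable def v₁ {m : ℕ} (X : V m) : ℝ :=
  -‖X.1‖ ^ 2 / (m : ℝ) + 2 * (X.2.1 + 1) * rad X

/-- `v₂(X) = -|x'|²/(n-1) - 2(x_n+1) r`. -/
noncomputable def v₂ {m : ℕ} (X : V m) : ℝ :=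
  -‖X.1‖ ^ 2 / (m : ℝ) - 2 * (X.2.1 + 1) * rad X

/-!
Write `w = x_n + i z` and let `√` be the principal branch, holomorphic off `P⁻`. Then `U = Re √w`,
`U_n = Re (√w)' = Re (2√w)⁻¹`, and `2 r U_n = U` because `|q|² Re q⁻¹ = Re q` for `q = √w`. Hence
`U_n v₁ = Re φ + (x_n + 1) Re √w` with `φ = -|x'|²/(n-1) · (√w)'` holomorphic, so its Laplacian in
`(x_n, z)` is `2 ∂_{x_n} Re √w = 2 U_n` (real parts of holomorphic functions are harmonic and
`Δ(x Re ψ) = 2 Re ψ'`), while its Laplacian in `x'` is `-2 U_n`. After the reflection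
`x_n ↦ -x_n` the same computation applies to `Ū_n v₂`. Finally `v₁ + v₂` depends on `x'` only,
so `(v₁)_r + (v₂)_r` vanishes identically.
-/

open Complex

lemma iteratedDeriv_two_eq_of_hasDerivAt {f f' : ℝ → ℝ} {f'' x : ℝ}
    (hf : ∀ᶠ y in 𝓝 x, HasDerivAt f (f' y) y) (hf' : HasDerivAt f' f'' x) :
    iteratedDeriv 2 f x = f'' := by
  rw [iteratedDeriv_succ, iteratedDeriv_one]
  have : deriv f =ᶠ[𝓝 x] f' := hf.mono fun y hy => hy.deriv
  rw [this.deriv_eq, hf'.deriv]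

lemma hasDerivAt_re_comp_line {f : ℂ → ℂ} {f' w a : ℂ} {s : ℝ}
    (h : HasDerivAt f f' (w + s * a)) :
    HasDerivAt (fun σ : ℝ => (f (w + σ * a)).re) (f' * a).re s := by
  have hline : HasDerivAt (fun σ : ℂ => w + σ * a) a s := by
    simpa using ((hasDerivAt_id (s : ℂ)).mul_const a).const_add w
  exact reCLM.hasFDerivAt.comp_hasDerivAt s ((h.comp (s : ℂ) hline).comp_ofReal)

lemma eventually_mem_line {S : Set ℂ} (hS : IsOpen S) {w : ℂ} (hw : w ∈ S) (a : ℂ) :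
    ∀ᶠ s : ℝ in 𝓝 0, w + s * a ∈ S := by
  have : Continuous fun s : ℝ => w + s * a := by fun_prop
  exact this.continuousAt.preimage_mem_nhds (by simpa using hS.mem_nhds hw)

lemma iteratedDeriv_two_re_add_mul_re_line {φ ψ : ℂ → ℂ} {S : Set ℂ} (hS : IsOpen S)
    (hφ : DifferentiableOn ℂ φ S) (hψ : DifferentiableOn ℂ ψ S) {w : ℂ} (hw : w ∈ S)
    (a : ℂ) (β γ : ℝ) :
    iteratedDeriv 2 (fun s : ℝ => (φ (w + s * a)).re + (β * s + γ) * (ψ (w + s * a)).re) 0 =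
      (deriv (deriv φ) w * a ^ 2).re + 2 * β * (deriv ψ w * a).re +
        γ * (deriv (deriv ψ) w * a ^ 2).re := by
  have hd : ∀ {f : ℂ → ℂ}, DifferentiableOn ℂ f S → ∀ ζ ∈ S, HasDerivAt f (deriv f ζ) ζ :=
    fun hf ζ hζ => (hf.differentiableAt (hS.mem_nhds hζ)).hasDerivAt
  have h0 : w + ((0 : ℝ) : ℂ) * a = w := by simp
  have hlin : ∀ s : ℝ, HasDerivAt (fun s : ℝ => β * s + γ) β s := fun s => by
    simpa using ((hasDerivAt_id s).const_mul β).add_const γ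
  apply iteratedDeriv_two_eq_of_hasDerivAt (f' := fun s : ℝ => (deriv φ (w + s * a) * a).re +
      (β * (ψ (w + s * a)).re + (β * s + γ) * (deriv ψ (w + s * a) * a).re))
  · filter_upwards [eventually_mem_line hS hw a] with s hs
    exact (hasDerivAt_re_comp_line (hd hφ _ hs)).add
      ((hlin s).mul (hasDerivAt_re_comp_line (hd hψ _ hs)))
  · have H₁ : HasDerivAt (fun s : ℝ => (deriv φ (w + s * a) * a).re)
        (deriv (deriv φ) w * a * a).re 0 :=
      hasDerivAt_re_comp_line (by rw [h0]; exact (hd (hφ.deriv hS) w hw).mul_const a)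
    have H₂ : HasDerivAt (fun s : ℝ => (ψ (w + s * a)).re) (deriv ψ w * a).re 0 :=
      hasDerivAt_re_comp_line (by rw [h0]; exact hd hψ w hw)
    have H₃ : HasDerivAt (fun s : ℝ => (deriv ψ (w + s * a) * a).re)
        (deriv (deriv ψ) w * a * a).re 0 :=
      hasDerivAt_re_comp_line (by rw [h0]; exact (hd (hψ.deriv hS) w hw).mul_const a)
    refine (H₁.fun_add ((H₂.const_mul β).fun_add ((hlin 0).fun_mul H₃))).congr_deriv ?_
    simp only [h0]
    ring_nf

lemma norm_add_smul_single_sq {m : ℕ} (x : EuclideanSpace ℝ (Fin m)) (i : Fin m) (s : ℝ) :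
    ‖x + s • EuclideanSpace.single i (1 : ℝ)‖ ^ 2 = ‖x‖ ^ 2 + 2 * x i * s + s ^ 2 := by
  rw [norm_add_sq_real, real_inner_smul_right, EuclideanSpace.inner_single_right, norm_smul,
    PiLp.norm_single]
  simp only [conj_trivial, one_mul, Real.norm_eq_abs, norm_one, mul_one, sq_abs]
  ring

lemma sum_iteratedDeriv_two_norm_sq_line {m : ℕ} (x : EuclideanSpace ℝ (Fin m)) (A B : ℝ) :
    ∑ i : Fin m, iteratedDeriv 2
      (fun s : ℝ => A + B * ‖x + s • EuclideanSpace.single i (1 : ℝ)‖ ^ 2) 0 = 2 * m * B := by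
  have h : ∀ i : Fin m, iteratedDeriv 2
      (fun s : ℝ => A + B * ‖x + s • EuclideanSpace.single i (1 : ℝ)‖ ^ 2) 0 = 2 * B := by
    intro i
    simp_rw [norm_add_smul_single_sq]
    apply iteratedDeriv_two_eq_of_hasDerivAt (f' := fun s => B * (2 * x i + 2 * s))
    · refine Eventually.of_forall fun s => ?_
      refine ((((hasDerivAt_id' s).const_mul (2 * x i)).const_add (‖x‖ ^ 2)).fun_add
        (hasDerivAt_pow 2 s) |>.const_mul B |>.const_add A).congr_deriv ?_
      simp
    · refine (((hasDerivAt_id' (0 : ℝ)).const_mul 2).const_add (2 * x i) |>.const_mul B).congr_deriv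
        (by ring)
  rw [Finset.sum_congr rfl fun i _ => h i, Finset.sum_const, Finset.card_univ, Fintype.card_fin,
    nsmul_eq_mul]
  ring

noncomputable def planeLap (u : ℝ × ℝ → ℝ) (t z : ℝ) : ℝ :=
  iteratedDeriv 2 (fun s => u (t + s, z)) 0 + iteratedDeriv 2 (fun s => u (t, z + s)) 0

lemma lapV_eq_sum_add_planeLap {m : ℕ} (u : V m → ℝ) (x' : EuclideanSpace ℝ (Fin m)) (t z : ℝ) :
    lapV u (x', t, z) = ∑ i : Fin m, iteratedDeriv 2
        (fun s : ℝ => u (x' + s • EuclideanSpace.single i (1 : ℝ), t, z)) 0 +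
      planeLap (fun p => u (x', p.1, p.2)) t z := by
  rw [lapV, planeLap, add_assoc]

lemma planeLap_re_add_mul_re {φ ψ : ℂ → ℂ} {S : Set ℂ} (hS : IsOpen S)
    (hφ : DifferentiableOn ℂ φ S) (hψ : DifferentiableOn ℂ ψ S) (α c : ℝ) {u : ℝ × ℝ → ℝ}
    (hu : ∀ p : ℝ × ℝ, (p.1 + p.2 * I : ℂ) ∈ S →
      u p = (φ (p.1 + p.2 * I)).re + (α * p.1 + c) * (ψ (p.1 + p.2 * I)).re)
    {t z : ℝ} (hw : (t + z * I : ℂ) ∈ S) :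
    planeLap u t z = 2 * α * (deriv ψ (t + z * I)).re := by
  set w : ℂ := t + z * I
  have horizontal : (fun s => u (t + s, z)) =ᶠ[𝓝 0]
      fun s : ℝ => (φ (w + s * 1)).re + (α * s + (α * t + c)) * (ψ (w + s * 1)).re := by
    filter_upwards [eventually_mem_line hS hw 1] with s hs
    have e : w + s * 1 = ((t + s : ℝ) : ℂ) + z * I := by simp only [w]; push_cast; ring
    rw [e] at hs ⊢
    rw [hu _ hs]
    ring
  have vertical : (fun s => u (t, z + s)) =ᶠ[𝓝 0]
      fun s : ℝ => (φ (w + s * I)).re + (0 * s + (α * t + c)) * (ψ (w + s * I)).re := by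
    filter_upwards [eventually_mem_line hS hw I] with s hs
    have e : w + s * I = (t : ℂ) + ((z + s : ℝ) : ℂ) * I := by simp only [w]; push_cast; ring
    rw [e] at hs ⊢
    rw [hu _ hs]
    ring
  rw [planeLap, (horizontal.iteratedDeriv 2).eq_of_nhds, (vertical.iteratedDeriv 2).eq_of_nhds,
    iteratedDeriv_two_re_add_mul_re_line hS hφ hψ hw,
    iteratedDeriv_two_re_add_mul_re_line hS hφ hψ hw]
  simp only [one_pow, mul_one, I_sq, mul_neg, neg_re]
  ring

lemma planeLap_comp_neg_fst (u : ℝ × ℝ → ℝ) (t z : ℝ) :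
    planeLap (fun p => u (-p.1, p.2)) t z = planeLap u (-t) z := by
  have h := iteratedDeriv_comp_neg 2 (fun s => u (-t + s, z)) 0
  simp only [neg_zero, even_two, Even.neg_pow, one_pow, one_smul] at h
  rw [planeLap, planeLap, ← h]
  simp only [neg_add]

noncomputable def csqrt (w : ℂ) : ℂ := w ^ (2⁻¹ : ℂ)

lemma U2_eq_re_csqrt (t z : ℝ) : U2 (t, z) = (csqrt (t + z * I)).re := by
  rw [csqrt, show (2⁻¹ : ℂ) = ((2⁻¹ : ℝ) : ℂ) by push_cast; rfl, cpow_ofReal_re,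
    norm_add_mul_I, ← one_div, ← Real.sqrt_eq_rpow, U2, div_eq_mul_inv, one_div]

lemma csqrt_sq (w : ℂ) : csqrt w ^ 2 = w :=
  cpow_ofNat_inv_pow w 2

lemma hasDerivAt_csqrt {w : ℂ} (hw : w ∈ slitPlane) : HasDerivAt csqrt (2 * csqrt w)⁻¹ w := by
  refine (hasStrictDerivAt_cpow_const (c := 2⁻¹) hw).hasDerivAt.congr_deriv ?_
  rw [csqrt, show (2⁻¹ : ℂ) - 1 = -2⁻¹ by norm_num, cpow_neg, mul_inv]

lemma differentiableOn_csqrt : DifferentiableOn ℂ csqrt slitPlane :=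
  fun _ hw => (hasDerivAt_csqrt hw).differentiableAt.differentiableWithinAt

lemma normSq_mul_inv_re (q : ℂ) : normSq q * q⁻¹.re = q.re := by
  rcases eq_or_ne q 0 with rfl | hq
  · simp
  · rw [inv_re, mul_div_cancel₀ _ (normSq_pos.mpr hq).ne']

lemma two_mul_norm_mul_re_deriv_csqrt {w : ℂ} (hw : w ∈ slitPlane) :
    2 * ‖w‖ * (deriv csqrt w).re = (csqrt w).re := by
  have hnorm : ‖w‖ = normSq (csqrt w) := by
    rw [normSq_eq_norm_sq, ← norm_pow, csqrt_sq]
  rw [(hasDerivAt_csqrt hw).deriv, mul_inv, hnorm, ← normSq_mul_inv_re (csqrt w)]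
  simp only [mul_re, inv_re, re_ofNat, normSq_ofNat, inv_im, im_ofNat, neg_zero, zero_div,
    zero_mul, sub_zero]
  ring

lemma ofReal_add_mul_I_mem_slitPlane {t z : ℝ} :
    (t + z * I : ℂ) ∈ slitPlane ↔ ¬(t ≤ 0 ∧ z = 0) := by
  rw [mem_slitPlane_iff]
  simp only [add_re, ofReal_re, mul_re, I_re, mul_zero, ofReal_im, I_im, mul_one, sub_self,
    add_zero, add_im, mul_im, zero_add]
  rw [not_and_or, not_le]

section

variable {m : ℕ} (x' : EuclideanSpace ℝ (Fin m)) {t z : ℝ}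

lemma norm_ofReal_add_mul_I_eq_rad :
    ‖(t + z * I : ℂ)‖ = rad ((x', t, z) : V m) := by
  rw [rad, norm_add_mul_I]

lemma Un_eq (hw : (t + z * I : ℂ) ∈ slitPlane) :
    Un ((x', t, z) : V m) = (deriv csqrt (t + z * I)).re := by
  have e : ∀ s : ℝ, (s + z * I : ℂ) = z * I + s * 1 := fun s => by ring
  have hc : HasDerivAt csqrt (deriv csqrt (t + z * I)) (z * I + t * 1) := by
    rw [← e]; exact (hasDerivAt_csqrt hw).differentiableAt.hasDerivAt
  have h : HasDerivAt (fun s : ℝ => U2 (s, z)) (deriv csqrt (t + z * I)).re t := by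
    simpa only [U2_eq_re_csqrt, e, mul_one] using hasDerivAt_re_comp_line hc
  exact h.deriv

lemma Ubarn_eq (hw : ((-t : ℝ) + z * I : ℂ) ∈ slitPlane) :
    Ubarn ((x', t, z) : V m) = -(deriv csqrt ((-t : ℝ) + z * I)).re := by
  have e : ∀ s : ℝ, ((-s : ℝ) + z * I : ℂ) = z * I + s * (-1) := fun s => by push_cast; ring
  have hc : HasDerivAt csqrt (deriv csqrt ((-t : ℝ) + z * I)) (z * I + t * (-1)) := by
    rw [← e]; exact (hasDerivAt_csqrt hw).differentiableAt.hasDerivAt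
  have h : HasDerivAt (fun s : ℝ => U2 (-s, z)) (-(deriv csqrt ((-t : ℝ) + z * I)).re) t := by
    simpa only [U2_eq_re_csqrt, e, mul_neg, mul_one, neg_re] using hasDerivAt_re_comp_line hc
  exact h.deriv

lemma Un_mul_v₁_eq (hw : (t + z * I : ℂ) ∈ slitPlane) :
    Un ((x', t, z) : V m) * v₁ (x', t, z) =
      (((-‖x'‖ ^ 2 / m : ℝ) : ℂ) * deriv csqrt (t + z * I)).re +
        (1 * t + 1) * (csqrt (t + z * I)).re := by
  rw [Un_eq x' hw, v₁, re_ofReal_mul, ← two_mul_norm_mul_re_deriv_csqrt hw,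
    norm_ofReal_add_mul_I_eq_rad x']
  ring

lemma Ubarn_mul_v₂_neg_eq (hw : (t + z * I : ℂ) ∈ slitPlane) :
    Ubarn ((x', -t, z) : V m) * v₂ (x', -t, z) =
      (((‖x'‖ ^ 2 / m : ℝ) : ℂ) * deriv csqrt (t + z * I)).re +
        (-1 * t + 1) * (csqrt (t + z * I)).re := by
  rw [Ubarn_eq x' (by rwa [neg_neg]), neg_neg, v₂, re_ofReal_mul,
    ← two_mul_norm_mul_re_deriv_csqrt hw, norm_ofReal_add_mul_I_eq_rad x', rad, rad, neg_sq]
  ring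

lemma planeLap_Un_mul_v₁ (hw : (t + z * I : ℂ) ∈ slitPlane) :
    planeLap (fun p => Un ((x', p.1, p.2) : V m) * v₁ (x', p.1, p.2)) t z =
      2 * Un ((x', t, z) : V m) := by
  rw [planeLap_re_add_mul_re isOpen_slitPlane
    ((differentiableOn_csqrt.deriv isOpen_slitPlane).const_mul _) differentiableOn_csqrt 1 1
    (fun p hp => Un_mul_v₁_eq x' hp) hw, Un_eq x' hw]
  ring

lemma planeLap_Ubarn_mul_v₂ (hw : ((-t : ℝ) + z * I : ℂ) ∈ slitPlane) :
    planeLap (fun p => Ubarn ((x', p.1, p.2) : V m) * v₂ (x', p.1, p.2)) t z =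
      2 * Ubarn ((x', t, z) : V m) := by
  have h := planeLap_comp_neg_fst (fun p => Ubarn ((x', p.1, p.2) : V m) * v₂ (x', p.1, p.2)) (-t) z
  rw [neg_neg] at h
  rw [← h, planeLap_re_add_mul_re isOpen_slitPlane
    ((differentiableOn_csqrt.deriv isOpen_slitPlane).const_mul _) differentiableOn_csqrt (-1) 1
    (fun p hp => Ubarn_mul_v₂_neg_eq x' hp) hw, Ubarn_eq x' hw]
  ring

lemma sum_iteratedDeriv_two_of_eq_mul_neg_norm_sq_div (hm : m ≠ 0) {u : V m → ℝ} (K c : ℝ)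
    (hu : ∀ y, u (y, t, z) = K * (-‖y‖ ^ 2 / m + c)) :
    ∑ i : Fin m, iteratedDeriv 2
      (fun s : ℝ => u (x' + s • EuclideanSpace.single i (1 : ℝ), t, z)) 0 = -2 * K := by
  have h := sum_iteratedDeriv_two_norm_sq_line x' (K * c) (-K / m)
  rw [show 2 * (m : ℝ) * (-K / m) = -2 * K by field_simp] at h
  refine (Finset.sum_congr rfl fun i _ =>
    congrArg (iteratedDeriv 2 · 0) (funext fun s => ?_)).trans h
  rw [hu]
  ring

lemma lapV_Un_mul_v₁ (hm : m ≠ 0) (hw : (t + z * I : ℂ) ∈ slitPlane) :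
    lapV (fun Y => Un Y * v₁ Y) ((x', t, z) : V m) = 0 := by
  -- `rfl` because `Un`, `Ubarn` and `rad` do not look at `x'`
  have hx' := sum_iteratedDeriv_two_of_eq_mul_neg_norm_sq_div x' hm (u := fun Y => Un Y * v₁ Y)
    (Un ((x', t, z) : V m)) (2 * (t + 1) * rad ((x', t, z) : V m)) fun _ => rfl
  rw [lapV_eq_sum_add_planeLap, hx', planeLap_Un_mul_v₁ x' hw]
  ring

lemma lapV_Ubarn_mul_v₂ (hm : m ≠ 0) (hw : ((-t : ℝ) + z * I : ℂ) ∈ slitPlane) :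
    lapV (fun Y => Ubarn Y * v₂ Y) ((x', t, z) : V m) = 0 := by
  have hx' := sum_iteratedDeriv_two_of_eq_mul_neg_norm_sq_div x' hm (u := fun Y => Ubarn Y * v₂ Y)
    (Ubarn ((x', t, z) : V m)) (-2 * (t + 1) * rad ((x', t, z) : V m)) fun y => by
      rw [v₂, sub_eq_add_neg, neg_mul, neg_mul]
      rfl
  rw [lapV_eq_sum_add_planeLap, hx', planeLap_Ubarn_mul_v₂ x' hw]
  ring

lemma v₂_eq_neg_sub_v₁ (X : V m) : v₂ X = -2 * ‖X.1‖ ^ 2 / m - v₁ X := by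
  rw [v₁, v₂]
  ring

lemma radDeriv_v₁_add_radDeriv_v₂ (X : V m) : radDeriv v₁ X + radDeriv v₂ X = 0 := by
  simp only [radDeriv, pdN, pdZ, v₂_eq_neg_sub_v₁, deriv_const_sub]
  ring

end

/-- `Δ(U_n v₁) = 0` in `B₁ \ P⁻`, `Δ(Ū_n v₂) = 0` in `B₁ \ P⁺`, and
`(v₁)_r + (v₂)_r → 0` at `L = {x_n = 0, z = 0}`. -/
theorem stmt5 {m : ℕ} (hm : 1 ≤ m) :
    (∀ X : V m, ‖X.1‖ ^ 2 + X.2.1 ^ 2 + X.2.2 ^ 2 < 1 → ¬(X.2.1 ≤ 0 ∧ X.2.2 = 0) →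
      lapV (fun Y => Un Y * v₁ Y) X = 0) ∧
    (∀ X : V m, ‖X.1‖ ^ 2 + X.2.1 ^ 2 + X.2.2 ^ 2 < 1 → ¬(0 ≤ X.2.1 ∧ X.2.2 = 0) →
      lapV (fun Y => Ubarn Y * v₂ Y) X = 0) ∧
    (∀ x' : EuclideanSpace ℝ (Fin m),
      Tendsto (fun p : ℝ × ℝ => radDeriv v₁ (x', p.1, p.2) + radDeriv v₂ (x', p.1, p.2))
        (𝓝[≠] (0 : ℝ × ℝ)) (𝓝 0)) := by
  have hm0 : m ≠ 0 := by omega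
  refine ⟨?_, ?_, fun x' => ?_⟩
  · rintro ⟨x', t, z⟩ - hP
    exact lapV_Un_mul_v₁ x' hm0 (ofReal_add_mul_I_mem_slitPlane.mpr hP)
  · rintro ⟨x', t, z⟩ - hP
    exact lapV_Ubarn_mul_v₂ x' hm0 (ofReal_add_mul_I_mem_slitPlane.mpr (by rwa [neg_nonpos]))
  · simpa only [radDeriv_v₁_add_radDeriv_v₂] using tendsto_const_nhds
end

section
/- For any 0 < ε < 2, the function U satisfies U(X + ε e_n) ≥ (1 + cε) U(X) for all X ∈ B₁ ⊂ ℝ^{n+1}, where c > 0 is a universal constant, e_n is the unit vector in the x_n direction, and U(X) = U(x_n, z) = r^{1/2} cos(θ/2). -/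
/-!
Squaring removes the half-angle: `U(t, z)² = (r + t)/2` with `r = √(t² + z²)`. Writing
`f(t) = r + t`, the identity `r_ε² - r² = 2tε + ε²` becomes
`(f(t + ε) - f(t)) (r + r_ε) = ε (f(t) + f(t + ε))`, and in the unit ball `r + r_ε < 4`,
so `f(t + ε) ≥ (1 + ε/4) f(t)`. Taking square roots gives the claim with `c = 1/10`,
since `(1 + ε/10)² ≤ 1 + ε/4` for `ε < 2`.
-/

open Real

/-- `U(X) = U(x_n, z)` on `ℝ^{n+1}`. -/
noncomputable def UU {m : ℕ} (X : V m) : ℝ := U2 (X.2.1, X.2.2)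

lemma U2_eq_sqrt (t z : ℝ) : U2 (t, z) = √((√(t ^ 2 + z ^ 2) + t) / 2) := by
  set w : ℂ := t + z * Complex.I with hw
  have hre : w.re = t := by simp [hw]
  have him : w.im = z := by simp [hw]
  have hnorm : ‖w‖ = √(t ^ 2 + z ^ 2) := by
    rw [Complex.norm_def, Complex.normSq_apply, hre, him, pow_two, pow_two]
  rcases eq_or_ne w 0 with hw0 | hw0
  · have ht : t = 0 := by rw [← hre, hw0, Complex.zero_re]
    have hz : z = 0 := by rw [← him, hw0, Complex.zero_im]
    simp [U2, ht, hz]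
  · have hr : 0 < √(t ^ 2 + z ^ 2) := hnorm ▸ norm_pos_iff.mpr hw0
    have hcos : cos (Complex.arg w / 2) = √((1 + t / √(t ^ 2 + z ^ 2)) / 2) := by
      rw [cos_half (Complex.neg_pi_lt_arg w).le (Complex.arg_le_pi w), Complex.cos_arg hw0,
        hre, hnorm]
    rw [U2, ← hw, hcos, ← sqrt_mul hr.le]
    congr 1
    field_simp

lemma sqrt_sq_add_sq_le_add_abs_sub (s t z : ℝ) :
    √(s ^ 2 + z ^ 2) ≤ √(t ^ 2 + z ^ 2) + |s - t| := by
  have hR : t ^ 2 + z ^ 2 = √(t ^ 2 + z ^ 2) ^ 2 := (sq_sqrt (by positivity)).symm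
  have ht : |t| ≤ √(t ^ 2 + z ^ 2) := abs_le_sqrt (le_add_of_nonneg_right (sq_nonneg z))
  have hcross : -(|t| * |s - t|) ≤ t * (t - s) := by
    simpa only [abs_mul, abs_sub_comm t s] using neg_abs_le (t * (t - s))
  rw [sqrt_le_left (by positivity)]
  nlinarith [sq_abs (s - t), mul_le_mul_of_nonneg_right ht (abs_nonneg (s - t))]

lemma sqrt_sq_add_sq_add_nonneg (t z : ℝ) : 0 ≤ √(t ^ 2 + z ^ 2) + t := by
  linarith [neg_abs_le t, abs_le_sqrt (le_add_of_nonneg_right (sq_nonneg z)) (x := t)]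

lemma monotone_sqrt_sq_add_sq_add (z : ℝ) : Monotone fun t => √(t ^ 2 + z ^ 2) + t := by
  intro s t hst
  have := sqrt_sq_add_sq_le_add_abs_sub s t z
  rw [abs_of_nonpos (sub_nonpos.mpr hst)] at this
  dsimp only
  linarith

lemma one_add_div_mul_sqrt_sq_add_sq_add_le {t z ε M : ℝ} (hε : 0 ≤ ε) (hM : 0 < M)
    (hsum : √(t ^ 2 + z ^ 2) + √((t + ε) ^ 2 + z ^ 2) ≤ M) :
    (1 + ε / M) * (√(t ^ 2 + z ^ 2) + t) ≤ √((t + ε) ^ 2 + z ^ 2) + (t + ε) := by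
  have hf := sqrt_sq_add_sq_add_nonneg t z
  have hmono : √(t ^ 2 + z ^ 2) + t ≤ √((t + ε) ^ 2 + z ^ 2) + (t + ε) :=
    monotone_sqrt_sq_add_sq_add z (by linarith)
  set r := √(t ^ 2 + z ^ 2)
  set rε := √((t + ε) ^ 2 + z ^ 2)
  have hr : r ^ 2 = t ^ 2 + z ^ 2 := sq_sqrt (by positivity)
  have hrε : rε ^ 2 = (t + ε) ^ 2 + z ^ 2 := sq_sqrt (by positivity)
  have hkey : (rε + (t + ε) - (r + t)) * (r + rε) = ε * ((r + t) + (rε + (t + ε))) := by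
    linear_combination hrε - hr
  rw [add_mul, one_mul, div_mul_eq_mul_div, ← le_sub_iff_add_le', div_le_iff₀ hM]
  nlinarith [mul_le_mul_of_nonneg_left hsum (sub_nonneg.mpr hmono)]

/-- For a universal constant `c > 0` and any `0 < ε < 2`,
`U(X + ε e_n) ≥ (1 + cε) U(X)` in the unit ball `B₁ ⊂ ℝ^{n+1}`. -/
theorem stmt13 :
    ∃ c : ℝ, 0 < c ∧ ∀ (m : ℕ) (ε : ℝ), 0 < ε → ε < 2 →
      ∀ X : V m, ‖X.1‖ ^ 2 + X.2.1 ^ 2 + X.2.2 ^ 2 < 1 →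
        (1 + c * ε) * UU X ≤ UU (X.1, X.2.1 + ε, X.2.2) := by
  refine ⟨1 / 10, by norm_num, fun m ε hε hε2 ⟨x', t, z⟩ hX => ?_⟩
  simp only [UU, U2_eq_sqrt]
  have hr : √(t ^ 2 + z ^ 2) < 1 := by
    rw [sqrt_lt' one_pos]
    nlinarith [sq_nonneg ‖x'‖]
  have hrε : √((t + ε) ^ 2 + z ^ 2) ≤ √(t ^ 2 + z ^ 2) + ε := by
    simpa [abs_of_pos hε] using sqrt_sq_add_sq_le_add_abs_sub (t + ε) t z
  have hgrowth := one_add_div_mul_sqrt_sq_add_sq_add_le (t := t) (z := z) hε.le four_pos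
    (by linarith [sqrt_nonneg (t ^ 2 + z ^ 2)])
  have hc : (1 + 1 / 10 * ε) ^ 2 ≤ 1 + ε / 4 := by nlinarith
  have hf := sqrt_sq_add_sq_add_nonneg t z
  have hfε := sqrt_sq_add_sq_add_nonneg (t + ε) z
  rw [le_sqrt (by positivity) (by positivity), mul_pow, sq_sqrt (by positivity)]
  nlinarith [mul_le_mul_of_nonneg_right hc hf]
end
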